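/- There exists a constant C > 0 such that the following holds. Let A > 0 and let U : ℝ³ ∖ {x' = 0} → ℝ³ be a continuously differentiable vector field whose derivative satisfies |∇U(x)| ≤ A / (|x| |x'|) for all x with x' ≠ 0. Then for all continuously differentiable, compactly supported vector fields v, w : ℝ³ → ℝ³, |∫_{ℝ³} ((v(x) · ∇)U(x)) · w(x) dx| ≤ C A (∫_{ℝ³} |∇v|² dx)^{1/2} (∫_{ℝ³} |∇w|² dx)^{1/2}. -/

import Mathlib

/-!
Off the axis `x' = 0`, a null set, `|((v·∇)U)·w| ≤ |∇U| |v| |w| ≤ A |v| |w| / (|x| |x'|)`, so by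
Cauchy–Schwarz it suffices to prove the weighted Hardy inequality
`∫ f² / (|x| |x'|) ≤ 8 ∫ |∇f|²` for the components `f` of `v` and `w`.

This follows from the vector-field method: integrating `f² div Y` by parts gives
`∫ f² div Y ≤ 2 (∫ f² |Y|²)^(1/2) (∫ |∇f|²)^(1/2)`. Put `r = (|x|² + ε²)^(1/2)` and
`r' = (|x'|² + ε²)^(1/2)`. The field `Y = x / r²` has `div Y ≥ 1 / r²` and `|Y| ≤ 1 / r`, which
gives the Hardy inequality `∫ f² / r² ≤ 4 ∫ |∇f|²`. The field `Y = (x', 0) / (r r')` has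
`div Y ≥ 1 / (r r') - 1 / r²` and `|Y| ≤ 1 / r`, which then gives `∫ f² / (r r') ≤ 8 ∫ |∇f|²`.
Fatou's lemma lets `ε → 0`.
-/

open MeasureTheory

/-- The Euclidean norm of `x' = (x₁, x₂)`, the first two coordinates of `x ∈ ℝ³`. -/
noncomputable def primeNorm3 (x : EuclideanSpace ℝ (Fin 3)) : ℝ :=
  Real.sqrt (x 0 ^ 2 + x 1 ^ 2)

/-- The Hilbert–Schmidt (Frobenius) norm of the Jacobian of `v` at `x`. -/
noncomputable def hsNorm (v : EuclideanSpace ℝ (Fin 3) → EuclideanSpace ℝ (Fin 3))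
    (x : EuclideanSpace ℝ (Fin 3)) : ℝ :=
  Real.sqrt (∑ i : Fin 3, ∑ j : Fin 3, (fderiv ℝ v x (EuclideanSpace.single j 1) i) ^ 2)

open Filter Topology

theorem integral_mul_le_sqrt_mul_sqrt {α : Type*} [MeasurableSpace α] {μ : Measure α}
    {f g : α → ℝ} (hf₀ : 0 ≤ f) (hg₀ : 0 ≤ g) (hf : MemLp f 2 μ) (hg : MemLp g 2 μ) :
    ∫ x, f x * g x ∂μ ≤ √(∫ x, f x ^ 2 ∂μ) * √(∫ x, g x ^ 2 ∂μ) := by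
  have h2 : ENNReal.ofReal 2 = 2 := by norm_num
  have := integral_mul_le_Lp_mul_Lq_of_nonneg Real.HolderConjugate.two_two
    (Eventually.of_forall hf₀) (Eventually.of_forall hg₀) (h2 ▸ hf) (h2 ▸ hg)
  simp only [Real.sqrt_eq_rpow, ← Real.rpow_two] at this ⊢
  exact this

theorem lintegral_ofReal_le_of_tendsto {α ι : Type*} [MeasurableSpace α] {μ : Measure α}
    {l : Filter ι} [l.NeBot] [l.IsCountablyGenerated] {F : ι → α → ℝ} {G : α → ℝ}
    {B : ENNReal} (hF : ∀ i, AEMeasurable (F i) μ)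
    (hlim : ∀ᵐ x ∂μ, Tendsto (fun i => F i x) l (𝓝 (G x)))
    (hB : ∀ᶠ i in l, ∫⁻ x, ENNReal.ofReal (F i x) ∂μ ≤ B) :
    ∫⁻ x, ENNReal.ofReal (G x) ∂μ ≤ B :=
  calc ∫⁻ x, ENNReal.ofReal (G x) ∂μ
      = ∫⁻ x, liminf (fun i => ENNReal.ofReal (F i x)) l ∂μ := by
        refine lintegral_congr_ae ?_
        filter_upwards [hlim] with x hx
        exact ((ENNReal.continuous_ofReal.tendsto _).comp hx).liminf_eq.symm
    _ ≤ liminf (fun i => ∫⁻ x, ENNReal.ofReal (F i x) ∂μ) l :=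
        lintegral_liminf_le' fun i => (hF i).ennreal_ofReal
    _ ≤ B := liminf_le_of_frequently_le' hB.frequently

theorem norm_integral_le_mul_of_ae_norm_le_mul {α E : Type*} [MeasurableSpace α] {μ : Measure α}
    [NormedAddCommGroup E] [NormedSpace ℝ E] {g : α → E} {F : α → ℝ} {A B : ℝ} (hA : 0 ≤ A)
    (hB : 0 ≤ B) (hg : ∀ᵐ x ∂μ, ‖g x‖ ≤ A * F x)
    (hF : ∫⁻ x, ENNReal.ofReal (F x) ∂μ ≤ ENNReal.ofReal B) :
    ‖∫ x, g x ∂μ‖ ≤ A * B := by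
  refine (norm_integral_le_lintegral_norm g).trans
    (ENNReal.toReal_le_of_le_ofReal (mul_nonneg hA hB) ?_)
  calc ∫⁻ x, ENNReal.ofReal ‖g x‖ ∂μ ≤ ∫⁻ x, ENNReal.ofReal A * ENNReal.ofReal (F x) ∂μ :=
        lintegral_mono_ae <| hg.mono fun x hx => by
          rw [← ENNReal.ofReal_mul hA]
          exact ENNReal.ofReal_le_ofReal hx
    _ = ENNReal.ofReal A * ∫⁻ x, ENNReal.ofReal (F x) ∂μ :=
        lintegral_const_mul' _ _ ENNReal.ofReal_ne_top
    _ ≤ ENNReal.ofReal (A * B) := by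
        rw [ENNReal.ofReal_mul hA]
        exact mul_le_mul_right hF _

theorem Continuous.integrable_of_support_subset {X M E : Type*} [TopologicalSpace X]
    [MeasurableSpace X] [OpensMeasurableSpace X] {μ : Measure X} [IsFiniteMeasureOnCompacts μ]
    [Zero M] [NormedAddCommGroup E] {f : X → M} {φ : X → E} (hφ : Continuous φ)
    (hfc : HasCompactSupport f) (hsupp : Function.support φ ⊆ Function.support f) : Integrable φ μ :=
  hφ.integrable_of_hasCompactSupport (hfc.mono hsupp)

theorem HasCompactSupport.integrable_sq_mul {X : Type*} [TopologicalSpace X] [MeasurableSpace X]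
    [OpensMeasurableSpace X] {μ : Measure X} [IsFiniteMeasureOnCompacts μ] {f φ : X → ℝ}
    (hfc : HasCompactSupport f) (hf : Continuous f) (hφ : Continuous φ) :
    Integrable (fun x => f x ^ 2 * φ x) μ :=
  ((hf.pow 2).mul hφ).integrable_of_support_subset hfc fun x hx hfx => hx (by simp [hfx])

theorem fderiv_sq_apply {E : Type*} [NormedAddCommGroup E] [NormedSpace ℝ E] {f : E → ℝ} {x : E}
    (hf : DifferentiableAt ℝ f x) (u : E) :
    fderiv ℝ (fun y => f y ^ 2) x u = 2 * f x * fderiv ℝ f x u := by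
  simp [(hf.hasFDerivAt.pow 2).fderiv, mul_assoc]

theorem integral_mul_fderiv_eq_neg_fderiv_mul_of_hasCompactSupport {E : Type*}
    [NormedAddCommGroup E] [NormedSpace ℝ E] [FiniteDimensional ℝ E] [MeasurableSpace E]
    [BorelSpace E] {μ : Measure E} [μ.IsAddHaarMeasure] {f g : E → ℝ}
    (hf : ContDiff ℝ 1 f) (hfc : HasCompactSupport f) (hg : ContDiff ℝ 1 g) (u : E) :
    ∫ x, f x * fderiv ℝ g x u ∂μ = -∫ x, fderiv ℝ f x u * g x ∂μ := by
  have hf' : Continuous fun x => fderiv ℝ f x u :=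
    (hf.continuous_fderiv one_ne_zero).clm_apply continuous_const
  have hg' : Continuous fun x => fderiv ℝ g x u :=
    (hg.continuous_fderiv one_ne_zero).clm_apply continuous_const
  exact integral_mul_fderiv_eq_neg_fderiv_mul_of_integrable
    ((hf'.mul hg.continuous).integrable_of_hasCompactSupport (hfc.fderiv_apply ℝ u).mul_right)
    ((hf.continuous.mul hg').integrable_of_hasCompactSupport hfc.mul_right)
    ((hf.continuous.mul hg.continuous).integrable_of_hasCompactSupport hfc.mul_right)
    (fun x _ => hf.differentiable one_ne_zero x) (fun x _ => hg.differentiable one_ne_zero x)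

theorem le_four_mul_of_le_two_mul_sqrt_mul_sqrt {a b : ℝ} (ha : 0 ≤ a) (hb : 0 ≤ b)
    (h : a ≤ 2 * √a * √b) : a ≤ 4 * b := by
  nlinarith [Real.sq_sqrt ha, Real.sq_sqrt hb, Real.sqrt_nonneg a, Real.sqrt_nonneg b]

theorem neg_two_mul_mul_sum_mul_le {ι : Type*} [Fintype ι] (S : Finset ι) {a h : ℝ}
    {b y : ι → ℝ} (hy : ∑ j ∈ S, y j ^ 2 ≤ h) :
    -(2 * a * ∑ j ∈ S, b j * y j) ≤ 2 * (|a| * √h * √(∑ j, b j ^ 2)) := by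
  have hcs : |∑ j ∈ S, b j * y j| ≤ √(∑ j, b j ^ 2) * √h :=
    calc |∑ j ∈ S, b j * y j| ≤ √(∑ j ∈ S, b j ^ 2) * √(∑ j ∈ S, y j ^ 2) :=
          (Real.abs_le_sqrt (Finset.sum_mul_sq_le_sq_mul_sq S _ _)).trans_eq
            (Real.sqrt_mul (Finset.sum_nonneg fun j _ => sq_nonneg _) _)
      _ ≤ √(∑ j, b j ^ 2) * √h := by
          gcongr
          exact Finset.subset_univ S
  calc -(2 * a * ∑ j ∈ S, b j * y j) ≤ 2 * (|a| * |∑ j ∈ S, b j * y j|) := by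
        rw [← abs_mul]
        linarith [neg_abs_le (a * ∑ j ∈ S, b j * y j)]
    _ ≤ 2 * (|a| * √h * √(∑ j, b j ^ 2)) := by
        rw [mul_assoc |a|, mul_comm √h]
        gcongr

section Coordinates

open EuclideanSpace

variable {ι : Type*} [Fintype ι]

local notation "𝔼" => EuclideanSpace ℝ ι

theorem fderiv_apply_coord {E : Type*} [NormedAddCommGroup E] [NormedSpace ℝ E] {v : E → 𝔼}
    {x : E} (hv : DifferentiableAt ℝ v x) (i : ι) (u : E) :
    fderiv ℝ (fun y => v y i) x u = fderiv ℝ v x u i := by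
  have h : HasFDerivAt (fun y => v y i) _ x :=
    (proj i : 𝔼 →L[ℝ] ℝ).hasFDerivAt.comp x hv.hasFDerivAt
  rw [h.fderiv]
  rfl

variable [DecidableEq ι]

theorem ae_coord_ne_zero (i : ι) : ∀ᵐ x : 𝔼, x i ≠ 0 := by
  rw [ae_iff]
  simp only [ne_eq, not_not]
  refine Measure.addHaar_submodule _ (LinearMap.ker (proj i : 𝔼 →L[ℝ] ℝ).toLinearMap) fun h => ?_
  have : single i (1 : ℝ) ∈ LinearMap.ker (proj i : 𝔼 →L[ℝ] ℝ).toLinearMap := h ▸ trivial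
  simp at this

theorem norm_apply_le_sqrt_sum_sq_mul_norm {κ : Type*} [Fintype κ]
    (L : 𝔼 →L[ℝ] EuclideanSpace ℝ κ) (v : 𝔼) :
    ‖L v‖ ≤ √(∑ i, ∑ j, L (single j 1) i ^ 2) * ‖v‖ := by
  have hv : L v = ∑ j, v j • L (single j 1) := by
    conv_lhs => rw [← (EuclideanSpace.basisFun ι ℝ).sum_repr v]
    simp
  rw [← Real.sqrt_sq (norm_nonneg v), ← Real.sqrt_mul (by positivity)]
  refine Real.le_sqrt_of_sq_le ?_
  rw [EuclideanSpace.real_norm_sq_eq, EuclideanSpace.real_norm_sq_eq, Finset.sum_mul]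
  refine Finset.sum_le_sum fun i _ => ?_
  rw [hv, mul_comm]
  simpa [mul_comm] using
    Finset.sum_mul_sq_le_sq_mul_sq Finset.univ (fun j => v j) (fun j => L (single j 1) i)

noncomputable def gradNormSq (f : 𝔼 → ℝ) (x : 𝔼) : ℝ :=
  ∑ j, fderiv ℝ f x (single j 1) ^ 2

theorem gradNormSq_nonneg (f : 𝔼 → ℝ) (x : 𝔼) : 0 ≤ gradNormSq f x :=
  Finset.sum_nonneg fun _ _ => sq_nonneg _

theorem continuous_gradNormSq {f : 𝔼 → ℝ} (hf : ContDiff ℝ 1 f) : Continuous (gradNormSq f) :=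
  continuous_finsetSum _ fun _ _ =>
    ((hf.continuous_fderiv one_ne_zero).clm_apply continuous_const).pow 2

theorem HasCompactSupport.gradNormSq {f : 𝔼 → ℝ} (hfc : HasCompactSupport f) :
    HasCompactSupport (gradNormSq f) :=
  (hfc.fderiv ℝ).comp_left (g := fun L : 𝔼 →L[ℝ] ℝ => ∑ j, L (single j 1) ^ 2) (by simp)

theorem integral_sq_mul_sum_fderiv_eq_neg (S : Finset ι) {f : 𝔼 → ℝ} (hf : ContDiff ℝ 1 f)
    (hfc : HasCompactSupport f) {Y : ι → 𝔼 → ℝ} (hY : ∀ j, ContDiff ℝ 1 (Y j)) :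
    ∫ x, f x ^ 2 * ∑ j ∈ S, fderiv ℝ (Y j) x (single j 1)
      = -∫ x, 2 * f x * ∑ j ∈ S, fderiv ℝ f x (single j 1) * Y j x := by
  have hf' : ∀ u, Continuous fun x => fderiv ℝ f x u :=
    fun _ => (hf.continuous_fderiv one_ne_zero).clm_apply continuous_const
  have hY' : ∀ j u, Continuous fun x => fderiv ℝ (Y j) x u :=
    fun j _ => ((hY j).continuous_fderiv one_ne_zero).clm_apply continuous_const
  have hYc : ∀ j, Continuous (Y j) := fun j => (hY j).continuous
  calc ∫ x, f x ^ 2 * ∑ j ∈ S, fderiv ℝ (Y j) x (single j 1)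
      = ∑ j ∈ S, ∫ x, f x ^ 2 * fderiv ℝ (Y j) x (single j 1) := by
        simp_rw [Finset.mul_sum]
        exact integral_finsetSum _ fun j _ => hfc.integrable_sq_mul hf.continuous (hY' j _)
    _ = ∑ j ∈ S, -∫ x, 2 * f x * (fderiv ℝ f x (single j 1) * Y j x) := by
        refine Finset.sum_congr rfl fun j _ => ?_
        rw [integral_mul_fderiv_eq_neg_fderiv_mul_of_hasCompactSupport (hf.pow 2)
          (hfc.comp_left (g := fun t : ℝ => t ^ 2) (by simp)) (hY j)]
        simp only [fderiv_sq_apply (hf.differentiable one_ne_zero _), mul_assoc]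
    _ = -∫ x, 2 * f x * ∑ j ∈ S, fderiv ℝ f x (single j 1) * Y j x := by
        rw [Finset.sum_neg_distrib, ← integral_finsetSum _ fun j _ =>
          (by fun_prop : Continuous _).integrable_of_support_subset hfc
            fun x hx hfx => hx (by simp [hfx])]
        simp only [Finset.mul_sum]

theorem integral_sq_mul_le_of_le_divergence (S : Finset ι) {f : 𝔼 → ℝ} (hf : ContDiff ℝ 1 f)
    (hfc : HasCompactSupport f) {Y : ι → 𝔼 → ℝ} (hY : ∀ j, ContDiff ℝ 1 (Y j)) {g h : 𝔼 → ℝ}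
    (hg : Continuous g) (hh : Continuous h)
    (hdiv : ∀ x, g x ≤ ∑ j ∈ S, fderiv ℝ (Y j) x (single j 1))
    (hYh : ∀ x, ∑ j ∈ S, Y j x ^ 2 ≤ h x) :
    ∫ x, f x ^ 2 * g x ≤ 2 * √(∫ x, f x ^ 2 * h x) * √(∫ x, gradNormSq f x) := by
  have hf' : ∀ u, Continuous fun x => fderiv ℝ f x u :=
    fun _ => (hf.continuous_fderiv one_ne_zero).clm_apply continuous_const
  have hY' : ∀ j u, Continuous fun x => fderiv ℝ (Y j) x u :=
    fun j _ => ((hY j).continuous_fderiv one_ne_zero).clm_apply continuous_const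
  have hYc : ∀ j, Continuous (Y j) := fun j => (hY j).continuous
  have hG := continuous_gradNormSq hf
  have hh₀ : ∀ x, 0 ≤ h x := fun x => (Finset.sum_nonneg fun j _ => sq_nonneg (Y j x)).trans (hYh x)
  have hfh : Continuous fun x => |f x| * √(h x) := by fun_prop
  calc ∫ x, f x ^ 2 * g x
      ≤ ∫ x, f x ^ 2 * ∑ j ∈ S, fderiv ℝ (Y j) x (single j 1) :=
        integral_mono (hfc.integrable_sq_mul hf.continuous hg)
          (hfc.integrable_sq_mul hf.continuous (by fun_prop))
          fun x => mul_le_mul_of_nonneg_left (hdiv x) (sq_nonneg _)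
    _ = ∫ x, -(2 * f x * ∑ j ∈ S, fderiv ℝ f x (single j 1) * Y j x) := by
        rw [integral_sq_mul_sum_fderiv_eq_neg S hf hfc hY, integral_neg]
    _ ≤ ∫ x, 2 * (|f x| * √(h x) * √(gradNormSq f x)) := by
        refine integral_mono ?_ ?_ fun x => neg_two_mul_mul_sum_mul_le S (hYh x)
        · exact (by fun_prop : Continuous _).integrable_of_support_subset hfc
            fun x hx hfx => hx (by simp [hfx])
        · exact (by fun_prop : Continuous _).integrable_of_support_subset hfc
            fun x hx hfx => hx (by simp [hfx])
    _ ≤ 2 * √(∫ x, f x ^ 2 * h x) * √(∫ x, gradNormSq f x) := by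
        rw [integral_const_mul, mul_assoc]
        refine mul_le_mul_of_nonneg_left ?_ zero_le_two
        calc ∫ x, |f x| * √(h x) * √(gradNormSq f x)
            ≤ √(∫ x, (|f x| * √(h x)) ^ 2) * √(∫ x, √(gradNormSq f x) ^ 2) :=
              integral_mul_le_sqrt_mul_sqrt (fun x => by positivity) (fun x => by positivity)
                (hfh.memLp_of_hasCompactSupport hfc.abs.mul_right)
                (hG.sqrt.memLp_of_hasCompactSupport (hfc.gradNormSq.comp_left Real.sqrt_zero))
          _ = √(∫ x, f x ^ 2 * h x) * √(∫ x, gradNormSq f x) := by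
              simp_rw [mul_pow, sq_abs, Real.sq_sqrt (hh₀ _), Real.sq_sqrt (gradNormSq_nonneg f _)]

end Coordinates

section HardyWeight

open EuclideanSpace

variable {ι : Type*}

local notation "𝔼" => EuclideanSpace ℝ ι

noncomputable def regNorm (S : Finset ι) (ε : ℝ) (x : 𝔼) : ℝ :=
  √(∑ i ∈ S, x i ^ 2 + ε ^ 2)

variable {S : Finset ι} {ε : ℝ}

theorem sq_regNorm (S : Finset ι) (ε : ℝ) (x : 𝔼) :
    regNorm S ε x ^ 2 = ∑ i ∈ S, x i ^ 2 + ε ^ 2 :=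
  Real.sq_sqrt (by positivity)

theorem regNorm_pos (hε : ε ≠ 0) (x : 𝔼) : 0 < regNorm S ε x :=
  Real.sqrt_pos.2 (by positivity)

theorem continuous_regNorm (S : Finset ι) (ε : ℝ) : Continuous (regNorm S ε) := by
  unfold regNorm
  fun_prop

variable [Fintype ι]

-- For `S = {0, 1}` in `ℝ³` this regularizes the weight `1 / (|x| |x'|)`.
noncomputable def hardyWeight (S : Finset ι) (ε : ℝ) (x : 𝔼) : ℝ :=
  (regNorm Finset.univ ε x * regNorm S ε x)⁻¹

theorem hardyWeight_pos (hε : ε ≠ 0) (x : 𝔼) : 0 < hardyWeight S ε x :=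
  inv_pos.2 (mul_pos (regNorm_pos hε x) (regNorm_pos hε x))

theorem contDiff_regNorm {n : WithTop ℕ∞} (hε : ε ≠ 0) : ContDiff ℝ n (regNorm S ε) :=
  ContDiff.sqrt (by fun_prop) fun x => by positivity

theorem contDiff_hardyWeight {n : WithTop ℕ∞} (hε : ε ≠ 0) : ContDiff ℝ n (hardyWeight S ε) :=
  ((contDiff_regNorm hε).mul (contDiff_regNorm hε)).inv fun x =>
    (mul_pos (regNorm_pos hε x) (regNorm_pos hε x)).ne'

theorem sum_sq_coord_mul_hardyWeight_le (hε : ε ≠ 0) (x : 𝔼) :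
    ∑ j ∈ S, (x j * hardyWeight S ε x) ^ 2 ≤ (regNorm Finset.univ ε x ^ 2)⁻¹ := by
  simp_rw [mul_pow, ← Finset.sum_mul]
  have hb := regNorm_pos (S := S) hε x
  calc (∑ j ∈ S, x j ^ 2) * hardyWeight S ε x ^ 2
      ≤ regNorm S ε x ^ 2 * hardyWeight S ε x ^ 2 := by
        gcongr
        rw [sq_regNorm]
        linarith [sq_nonneg ε]
    _ = (regNorm Finset.univ ε x ^ 2)⁻¹ := by
        rw [hardyWeight]
        field_simp

theorem regNorm_univ_zero (x : 𝔼) : regNorm Finset.univ 0 x = ‖x‖ := by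
  simp [regNorm, EuclideanSpace.norm_eq]

theorem measurable_hardyWeight (S : Finset ι) (ε : ℝ) : Measurable (hardyWeight S ε) :=
  ((continuous_regNorm _ _).mul (continuous_regNorm _ _)).measurable.inv

theorem tendsto_hardyWeight {x : 𝔼}
    (hx : regNorm Finset.univ 0 x * regNorm S 0 x ≠ 0) :
    Tendsto (fun ε => hardyWeight S ε x) (𝓝 0) (𝓝 (hardyWeight S 0 x)) := by
  have hc : ∀ T : Finset ι, Continuous fun ε => regNorm T ε x := fun T => by
    unfold regNorm
    fun_prop
  exact (((hc _).mul (hc _)).continuousAt.inv₀ hx).tendsto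

variable [DecidableEq ι]

theorem fderiv_regNorm_single {j : ι} (hj : j ∈ S) (hε : ε ≠ 0) (x : 𝔼) :
    fderiv ℝ (regNorm S ε) x (single j 1) = x j / regNorm S ε x := by
  have hq : HasFDerivAt (fun y : 𝔼 => ∑ i ∈ S, y i ^ 2 + ε ^ 2)
      (∑ i ∈ S, (2 * x i) • (proj i : 𝔼 →L[ℝ] ℝ)) x := by
    refine (HasFDerivAt.fun_sum fun i _ => ?_).add_const _
    simpa using ((proj i : 𝔼 →L[ℝ] ℝ).hasFDerivAt (x := x)).pow 2
  have hr : HasFDerivAt (regNorm S ε) _ x := hq.sqrt (by positivity)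
  rw [hr.fderiv]
  simp [hj, regNorm]
  ring

theorem fderiv_hardyWeight_single {j : ι} (hj : j ∈ S) (hε : ε ≠ 0) (x : 𝔼) :
    fderiv ℝ (hardyWeight S ε) x (single j 1) = -hardyWeight S ε x * x j *
      ((regNorm Finset.univ ε x ^ 2)⁻¹ + (regNorm S ε x ^ 2)⁻¹) := by
  have h₁ := regNorm_pos (S := Finset.univ) hε x
  have h₂ := regNorm_pos (S := S) hε x
  have hd : ∀ T : Finset ι, DifferentiableAt ℝ (regNorm T ε) x :=
    fun T => (contDiff_regNorm (n := 1) hε).differentiable one_ne_zero x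
  have hprod := (hd Finset.univ).hasFDerivAt.mul (hd S).hasFDerivAt
  have hφ : HasFDerivAt (hardyWeight S ε) _ x :=
    (hasDerivAt_inv (mul_pos h₁ h₂).ne').comp_hasFDerivAt x hprod
  rw [hφ.fderiv]
  simp [fderiv_regNorm_single hj hε, fderiv_regNorm_single (Finset.mem_univ j) hε, hardyWeight]
  field_simp
  ring

theorem fderiv_coord_mul_hardyWeight_single {j : ι} (hj : j ∈ S) (hε : ε ≠ 0) (x : 𝔼) :
    fderiv ℝ (fun y : 𝔼 => y j * hardyWeight S ε y) x (single j 1) = hardyWeight S ε x *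
      (1 - x j ^ 2 * ((regNorm Finset.univ ε x ^ 2)⁻¹ + (regNorm S ε x ^ 2)⁻¹)) := by
  have h : HasFDerivAt (fun y : 𝔼 => y j * hardyWeight S ε y) _ x :=
    ((proj j : 𝔼 →L[ℝ] ℝ).hasFDerivAt (x := x)).mul
      ((contDiff_hardyWeight (S := S) (n := 1) hε).differentiable one_ne_zero x).hasFDerivAt
  rw [h.fderiv]
  simp [fderiv_hardyWeight_single hj hε]
  ring

theorem le_sum_fderiv_coord_mul_hardyWeight (hε : ε ≠ 0) (x : 𝔼) :
    (S.card - 1) * hardyWeight S ε x - (regNorm Finset.univ ε x ^ 2)⁻¹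
      ≤ ∑ j ∈ S, fderiv ℝ (fun y : 𝔼 => y j * hardyWeight S ε y) x (single j 1) := by
  rw [Finset.sum_congr rfl fun j hj => fderiv_coord_mul_hardyWeight_single hj hε x,
    ← Finset.mul_sum, Finset.sum_sub_distrib, ← Finset.sum_mul]
  set t := ∑ j ∈ S, x j ^ 2
  have ha := regNorm_pos (S := Finset.univ) hε x
  have hb := regNorm_pos (S := S) hε x
  have ht : 0 ≤ t := Finset.sum_nonneg fun j _ => sq_nonneg _
  have htb : t ≤ regNorm S ε x ^ 2 := by rw [sq_regNorm]; linarith [sq_nonneg ε]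
  have hta : t ≤ regNorm Finset.univ ε x ^ 2 := by
    rw [sq_regNorm]
    linarith [sq_nonneg ε, Finset.sum_le_univ_sum_of_nonneg (s := S) fun j => sq_nonneg (x j)]
  have htab : t ≤ regNorm Finset.univ ε x * regNorm S ε x := by nlinarith
  have h₁ : hardyWeight S ε x * t * (regNorm Finset.univ ε x ^ 2)⁻¹
      ≤ (regNorm Finset.univ ε x ^ 2)⁻¹ := by
    refine mul_le_of_le_one_left (by positivity) ?_
    rw [hardyWeight, inv_mul_le_iff₀ (by positivity)]
    linarith
  have h₂ : t * (regNorm S ε x ^ 2)⁻¹ ≤ 1 := by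
    rw [mul_inv_le_iff₀ (by positivity)]
    linarith
  have hφ := hardyWeight_pos (S := S) hε x
  simp only [Finset.sum_const, nsmul_eq_mul, mul_one]
  nlinarith

theorem card_sub_one_mul_integral_hardyWeight_le (hε : ε ≠ 0) {f : 𝔼 → ℝ} (hf : ContDiff ℝ 1 f)
    (hfc : HasCompactSupport f) :
    (S.card - 1) * (∫ x, f x ^ 2 * hardyWeight S ε x)
        - ∫ x, f x ^ 2 * (regNorm Finset.univ ε x ^ 2)⁻¹
      ≤ 2 * √(∫ x, f x ^ 2 * (regNorm Finset.univ ε x ^ 2)⁻¹) * √(∫ x, gradNormSq f x) := by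
  have hφ : Continuous (hardyWeight S ε) := (contDiff_hardyWeight (n := 0) hε).continuous
  have hr : Continuous fun x : 𝔼 => (regNorm Finset.univ ε x ^ 2)⁻¹ :=
    ((continuous_regNorm _ _).pow 2).inv₀ fun x => (pow_pos (regNorm_pos hε x) 2).ne'
  calc (S.card - 1) * (∫ x, f x ^ 2 * hardyWeight S ε x)
        - ∫ x, f x ^ 2 * (regNorm Finset.univ ε x ^ 2)⁻¹
      = ∫ x, f x ^ 2 * ((S.card - 1) * hardyWeight S ε x - (regNorm Finset.univ ε x ^ 2)⁻¹) := by
        rw [← integral_const_mul, ← integral_sub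
          ((hfc.integrable_sq_mul hf.continuous hφ).const_mul _)
          (hfc.integrable_sq_mul hf.continuous hr)]
        congr 1 with x
        ring
    _ ≤ _ := integral_sq_mul_le_of_le_divergence S hf hfc
        (fun j => (proj j : 𝔼 →L[ℝ] ℝ).contDiff.mul (contDiff_hardyWeight hε))
        ((continuous_const.mul hφ).sub hr) hr (le_sum_fderiv_coord_mul_hardyWeight hε)
        (sum_sq_coord_mul_hardyWeight_le hε)

theorem integral_sq_mul_inv_regNorm_sq_le (hι : 3 ≤ Fintype.card ι) (hε : ε ≠ 0)
    {f : 𝔼 → ℝ} (hf : ContDiff ℝ 1 f) (hfc : HasCompactSupport f) :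
    ∫ x, f x ^ 2 * (regNorm Finset.univ ε x ^ 2)⁻¹ ≤ 4 * ∫ x, gradNormSq f x := by
  have key := card_sub_one_mul_integral_hardyWeight_le (S := Finset.univ) hε hf hfc
  simp only [hardyWeight, ← sq, Finset.card_univ] at key
  refine le_four_mul_of_le_two_mul_sqrt_mul_sqrt (integral_nonneg fun x => by positivity)
    (integral_nonneg fun x => gradNormSq_nonneg f x) ?_
  have hι' : (3 : ℝ) ≤ Fintype.card ι := by exact_mod_cast hι
  have hH : 0 ≤ ∫ x, f x ^ 2 * (regNorm Finset.univ ε x ^ 2)⁻¹ :=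
    integral_nonneg fun x => by positivity
  nlinarith

theorem integral_sq_mul_hardyWeight_le (hι : 3 ≤ Fintype.card ι) (hS : 2 ≤ S.card)
    (hε : ε ≠ 0) {f : 𝔼 → ℝ} (hf : ContDiff ℝ 1 f) (hfc : HasCompactSupport f) :
    ∫ x, f x ^ 2 * hardyWeight S ε x ≤ 8 * ∫ x, gradNormSq f x := by
  have key := card_sub_one_mul_integral_hardyWeight_le (S := S) hε hf hfc
  have hardy := integral_sq_mul_inv_regNorm_sq_le hι hε hf hfc
  set H := ∫ x, f x ^ 2 * (regNorm Finset.univ ε x ^ 2)⁻¹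
  set G := ∫ x, gradNormSq f x
  have hG : 0 ≤ G := integral_nonneg fun x => gradNormSq_nonneg f x
  have hI : 0 ≤ ∫ x, f x ^ 2 * hardyWeight S ε x :=
    integral_nonneg fun x => mul_nonneg (sq_nonneg _) (hardyWeight_pos hε x).le
  have hsqrt : √H ≤ 2 * √G := (Real.sqrt_le_left (by positivity)).2 (by nlinarith [Real.sq_sqrt hG])
  have hS' : (2 : ℝ) ≤ S.card := by exact_mod_cast hS
  nlinarith [Real.sq_sqrt hG, Real.sqrt_nonneg G, Real.sqrt_nonneg H]

end HardyWeight

section ThreeSpace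

local notation "ℝ³" => EuclideanSpace ℝ (Fin 3)

theorem sq_hsNorm {v : ℝ³ → ℝ³}
    {x : ℝ³} (hv : DifferentiableAt ℝ v x) :
    hsNorm v x ^ 2 = ∑ i, gradNormSq (fun y => v y i) x := by
  rw [hsNorm, Real.sq_sqrt (by positivity)]
  simp only [gradNormSq, fderiv_apply_coord hv]

theorem integral_norm_sq_mul_hardyWeight_le {S : Finset (Fin 3)} (hS : 2 ≤ S.card) {ε : ℝ}
    (hε : ε ≠ 0) {v : ℝ³ → ℝ³} (hv : ContDiff ℝ 1 v)
    (hvc : HasCompactSupport v) :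
    ∫ x, ‖v x‖ ^ 2 * hardyWeight S ε x ≤ 8 * ∫ x, hsNorm v x ^ 2 := by
  have hvi : ∀ i, ContDiff ℝ 1 fun x => v x i :=
    fun i => (EuclideanSpace.proj i : ℝ³ →L[ℝ] ℝ).contDiff.comp hv
  have hvic : ∀ i, HasCompactSupport fun x => v x i := fun i =>
    hvc.comp_left (g := fun y : ℝ³ => y i) rfl
  have hφ : Continuous (hardyWeight S ε) := (contDiff_hardyWeight (n := 0) hε).continuous
  calc ∫ x, ‖v x‖ ^ 2 * hardyWeight S ε x
      = ∑ i, ∫ x, v x i ^ 2 * hardyWeight S ε x := by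
        simp_rw [EuclideanSpace.real_norm_sq_eq, Finset.sum_mul]
        refine integral_finsetSum _ fun i _ => ?_
        exact (hvic i).integrable_sq_mul (hvi i).continuous hφ
    _ ≤ ∑ i, 8 * ∫ x, gradNormSq (fun y => v y i) x :=
        Finset.sum_le_sum fun i _ =>
          integral_sq_mul_hardyWeight_le (by simp) hS hε (hvi i) (hvic i)
    _ = 8 * ∫ x, hsNorm v x ^ 2 := by
        rw [← Finset.mul_sum, ← integral_finsetSum _ fun i _ =>
          (continuous_gradNormSq (hvi i)).integrable_of_hasCompactSupport (hvic i).gradNormSq]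
        simp_rw [sq_hsNorm (hv.differentiable one_ne_zero _)]

theorem integral_norm_mul_norm_mul_hardyWeight_le {S : Finset (Fin 3)} (hS : 2 ≤ S.card) {ε : ℝ}
    (hε : ε ≠ 0) {v w : ℝ³ → ℝ³}
    (hv : ContDiff ℝ 1 v) (hvc : HasCompactSupport v)
    (hw : ContDiff ℝ 1 w) (hwc : HasCompactSupport w) :
    ∫ x, ‖v x‖ * ‖w x‖ * hardyWeight S ε x
      ≤ 8 * √(∫ x, hsNorm v x ^ 2) * √(∫ x, hsNorm w x ^ 2) := by
  have hφ := fun x => (hardyWeight_pos (S := S) hε x).le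
  have hφc : Continuous fun x => √(hardyWeight S ε x) :=
    (contDiff_hardyWeight (n := 0) hε).continuous.sqrt
  calc ∫ x, ‖v x‖ * ‖w x‖ * hardyWeight S ε x
      = ∫ x, (‖v x‖ * √(hardyWeight S ε x)) * (‖w x‖ * √(hardyWeight S ε x)) := by
        congr 1 with x
        rw [mul_mul_mul_comm, Real.mul_self_sqrt (hφ x)]
    _ ≤ √(∫ x, (‖v x‖ * √(hardyWeight S ε x)) ^ 2) * √(∫ x, (‖w x‖ * √(hardyWeight S ε x)) ^ 2) :=
        integral_mul_le_sqrt_mul_sqrt (fun x => by positivity) (fun x => by positivity)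
          ((hv.continuous.norm.mul hφc).memLp_of_hasCompactSupport hvc.norm.mul_right)
          ((hw.continuous.norm.mul hφc).memLp_of_hasCompactSupport hwc.norm.mul_right)
    _ ≤ √(8 * ∫ x, hsNorm v x ^ 2) * √(8 * ∫ x, hsNorm w x ^ 2) := by
        simp_rw [mul_pow, Real.sq_sqrt (hφ _)]
        gcongr
        · exact integral_norm_sq_mul_hardyWeight_le hS hε hv hvc
        · exact integral_norm_sq_mul_hardyWeight_le hS hε hw hwc
    _ = 8 * √(∫ x, hsNorm v x ^ 2) * √(∫ x, hsNorm w x ^ 2) := by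
        rw [Real.sqrt_mul (by norm_num), Real.sqrt_mul (by norm_num)]
        linear_combination (√(∫ x, hsNorm v x ^ 2) * √(∫ x, hsNorm w x ^ 2)) *
          Real.mul_self_sqrt (show (0 : ℝ) ≤ 8 by norm_num)

theorem abs_sum_fderiv_apply_mul_le (U : ℝ³ → ℝ³)
    (x a b : ℝ³) :
    |∑ i, fderiv ℝ U x a i * b i| ≤ hsNorm U x * ‖a‖ * ‖b‖ :=
  calc |∑ i, fderiv ℝ U x a i * b i| = |inner ℝ (fderiv ℝ U x a) b| := by
        simp [PiLp.inner_apply, mul_comm]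
    _ ≤ ‖fderiv ℝ U x a‖ * ‖b‖ := abs_real_inner_le_norm _ _
    _ ≤ hsNorm U x * ‖a‖ * ‖b‖ := by
        gcongr
        exact norm_apply_le_sqrt_sum_sq_mul_norm _ _

theorem regNorm_pair_zero (x : ℝ³) : regNorm {0, 1} 0 x = primeNorm3 x := by
  simp [regNorm, primeNorm3]

theorem lintegral_norm_mul_norm_div_le {v w : ℝ³ → ℝ³}
    (hv : ContDiff ℝ 1 v) (hvc : HasCompactSupport v)
    (hw : ContDiff ℝ 1 w) (hwc : HasCompactSupport w) :
    ∫⁻ x, ENNReal.ofReal (‖v x‖ * ‖w x‖ / (‖x‖ * primeNorm3 x))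
      ≤ ENNReal.ofReal (8 * √(∫ x, hsNorm v x ^ 2) * √(∫ x, hsNorm w x ^ 2)) := by
  refine lintegral_ofReal_le_of_tendsto (l := 𝓝[≠] (0 : ℝ))
    (F := fun ε x => ‖v x‖ * ‖w x‖ * hardyWeight {0, 1} ε x)
    (fun ε => ((hv.continuous.norm.mul hw.continuous.norm).measurable.mul
      (measurable_hardyWeight _ ε)).aemeasurable) ?_ ?_
  · filter_upwards [ae_coord_ne_zero (0 : Fin 3)] with x hx
    have hne : regNorm Finset.univ 0 x * regNorm {0, 1} 0 x ≠ 0 := by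
      rw [regNorm_univ_zero, regNorm_pair_zero]
      have hx' : x ≠ 0 := fun h => hx (by simp [h])
      have : 0 < primeNorm3 x := Real.sqrt_pos.2 (by positivity)
      positivity
    have := ((tendsto_hardyWeight hne).mono_left (nhdsWithin_le_nhds (s := {0}ᶜ))).const_mul
      (‖v x‖ * ‖w x‖)
    simpa [hardyWeight, regNorm_univ_zero, regNorm_pair_zero, div_eq_mul_inv] using this
  · filter_upwards [self_mem_nhdsWithin] with ε hε
    rw [← ofReal_integral_eq_lintegral_ofReal]
    · exact ENNReal.ofReal_le_ofReal
        (integral_norm_mul_norm_mul_hardyWeight_le (by decide) hε hv hvc hw hwc)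
    · exact ((hv.continuous.norm.mul hw.continuous.norm).mul
        (contDiff_hardyWeight (n := 0) hε).continuous).integrable_of_hasCompactSupport
        hvc.norm.mul_right.mul_right
    · exact Eventually.of_forall fun x => by
        have := (hardyWeight_pos (S := {0, 1}) hε x).le
        positivity

end ThreeSpace

theorem stmt3 :
    ∃ C > 0, ∀ A : ℝ, 0 < A →
      ∀ U : EuclideanSpace ℝ (Fin 3) → EuclideanSpace ℝ (Fin 3),
        ContDiffOn ℝ 1 U {x | ¬(x 0 = 0 ∧ x 1 = 0)} →
        (∀ x : EuclideanSpace ℝ (Fin 3), ¬(x 0 = 0 ∧ x 1 = 0) →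
          hsNorm U x ≤ A / (‖x‖ * primeNorm3 x)) →
        ∀ v w : EuclideanSpace ℝ (Fin 3) → EuclideanSpace ℝ (Fin 3),
          ContDiff ℝ 1 v → HasCompactSupport v →
          ContDiff ℝ 1 w → HasCompactSupport w →
          |∫ x, ∑ i : Fin 3, fderiv ℝ U x (v x) i * w x i|
            ≤ C * A * Real.sqrt (∫ x, hsNorm v x ^ 2) * Real.sqrt (∫ x, hsNorm w x ^ 2) := by
  refine ⟨8, by norm_num, fun A hA U _ hU v w hv hvc hw hwc => ?_⟩
  have hpt : ∀ᵐ x, ‖∑ i, fderiv ℝ U x (v x) i * w x i‖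
      ≤ A * (‖v x‖ * ‖w x‖ / (‖x‖ * primeNorm3 x)) := by
    filter_upwards [ae_coord_ne_zero (0 : Fin 3)] with x hx
    calc ‖∑ i, fderiv ℝ U x (v x) i * w x i‖ ≤ hsNorm U x * ‖v x‖ * ‖w x‖ :=
          abs_sum_fderiv_apply_mul_le U x (v x) (w x)
      _ ≤ A / (‖x‖ * primeNorm3 x) * ‖v x‖ * ‖w x‖ := by
          gcongr
          exact hU x fun h => hx h.1
      _ = A * (‖v x‖ * ‖w x‖ / (‖x‖ * primeNorm3 x)) := by ring
  calc |∫ x, ∑ i, fderiv ℝ U x (v x) i * w x i|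
      ≤ A * (8 * √(∫ x, hsNorm v x ^ 2) * √(∫ x, hsNorm w x ^ 2)) :=
        norm_integral_le_mul_of_ae_norm_le_mul hA.le (by positivity) hpt
          (lintegral_norm_mul_norm_div_le hv hvc hw hwc)
    _ = 8 * A * √(∫ x, hsNorm v x ^ 2) * √(∫ x, hsNorm w x ^ 2) := by ring
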